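/- Let G be a finitely generated group. Then 𝔥(G/Γ₂G) ≅ 𝔥(G)/𝔥(G)′, and for every k ≥ 3 the projection G → G/Γ_kG induces an isomorphism of graded Lie algebras 𝔥(G) ≅ 𝔥(G/Γ_kG). In particular, the holonomy Lie algebra of G depends only on the second nilpotent quotient G/Γ₃G. -/

import Mathlib

open TensorProduct

open scoped commutatorElement

noncomputable section

namespace ArXiv170107768

/-! ### Fox calculus and Magnus coefficients for free groups -/

/-- The integral group ring `ℤF` of the free group on `n` generators. -/
abbrev GrpRing (n : ℕ) := MonoidAlgebra ℤ (FreeGroup (Fin n))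

/-- Auxiliary group used to define Fox derivatives: pairs `(g, d)` with
multiplication `(g, d) * (h, e) = (g h, d + g·e)`, encoding the Fox product rule
`∂(uv) = ∂u · ε(v) + u · ∂v`. -/
def FoxPair (n : ℕ) := FreeGroup (Fin n) × GrpRing n

instance (n : ℕ) : Group (FoxPair n) where
  mul a b := (a.1 * b.1, a.2 + MonoidAlgebra.single a.1 1 * b.2)
  one := (1, 0)
  inv a := (a.1⁻¹, -(MonoidAlgebra.single a.1⁻¹ 1 * a.2))
  mul_assoc a b c := by
    refine Prod.ext (mul_assoc _ _ _) ?_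
    show (a.2 + MonoidAlgebra.single a.1 1 * b.2) + MonoidAlgebra.single (a.1 * b.1) 1 * c.2
        = a.2 + MonoidAlgebra.single a.1 1 * (b.2 + MonoidAlgebra.single b.1 1 * c.2)
    rw [mul_add, ← mul_assoc, MonoidAlgebra.single_mul_single, mul_one, add_assoc]
  one_mul a := by
    refine Prod.ext (one_mul _) ?_
    show 0 + MonoidAlgebra.single 1 1 * a.2 = a.2
    rw [← MonoidAlgebra.one_def, one_mul, zero_add]
  mul_one a := by
    refine Prod.ext (mul_one _) ?_
    show a.2 + MonoidAlgebra.single a.1 1 * 0 = a.2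
    rw [mul_zero, add_zero]
  inv_mul_cancel a := by
    refine Prod.ext (inv_mul_cancel _) ?_
    show -(MonoidAlgebra.single a.1⁻¹ 1 * a.2) + MonoidAlgebra.single a.1⁻¹ 1 * a.2 = 0
    exact neg_add_cancel _

/-- The group homomorphism `F → F ⋉ ℤF` whose second component is the `i`-th Fox
derivative (on group elements). It is determined by `x_j ↦ (x_j, δ_{ij})`. -/
def foxHom {n : ℕ} (i : Fin n) : FreeGroup (Fin n) →* FoxPair n :=
  FreeGroup.lift fun j => (FreeGroup.of j, if j = i then 1 else 0)

/-- The `i`-th Fox derivative `∂_i : ℤF → ℤF`, extended `ℤ`-linearly from group elements. -/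
def foxD {n : ℕ} (i : Fin n) : GrpRing n →ₗ[ℤ] GrpRing n :=
  (Finsupp.linearCombination ℤ fun g => (foxHom i g).2) ∘ₗ
    (MonoidAlgebra.coeffLinearEquiv ℤ).toLinearMap

/-- The augmentation map `ε : ℤF → ℤ`. -/
def aug {n : ℕ} : GrpRing n →ₗ[ℤ] ℤ :=
  (Finsupp.linearCombination ℤ fun _ => (1 : ℤ)) ∘ₗ
    (MonoidAlgebra.coeffLinearEquiv ℤ).toLinearMap

/-- For a multi-index `I = (i₁, …, i_s)`, the iterated Fox derivative coefficient
`ε_I(w) = ε(∂_{i₁}(∂_{i₂}(⋯ ∂_{i_s}(w))))`; this is the coefficient of `x_{i₁}⋯x_{i_s}`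
in the classical Magnus expansion of `w`. -/
def epsI {n : ℕ} (I : List (Fin n)) (w : FreeGroup (Fin n)) : ℤ :=
  aug (I.foldr (fun i x => foxD i x) (MonoidAlgebra.single w 1))

/-- The coefficients of the Magnus `κ`-expansion relative to the `b × n` matrix `a` of
`π = H₁(φ; ℚ)`:  `κ(w)_{(i₁,…,i_k)} = Σ_{s₁,…,s_k} a_{i₁ s₁} ⋯ a_{i_k s_k} ε_{(s₁,…,s_k)}(w)`. -/
def kappaCoeff {n b : ℕ} (a : Fin b → Fin n → ℚ) (w : FreeGroup (Fin n))
    (I : List (Fin b)) : ℚ :=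
  ∑ σ : Fin I.length → Fin n, (∏ j, a (I.get j) (σ j)) * (epsI (List.ofFn σ) w : ℚ)

/-- The degree-2 part of the Magnus `κ`-expansion, viewed in the free Lie algebra:
`κ₂(w) = Σ_{i<j} κ(w)_{i,j} [y_i, y_j]`. -/
def kappa2El {n b : ℕ} (a : Fin b → Fin n → ℚ) (w : FreeGroup (Fin n)) :
    FreeLieAlgebra ℚ (Fin b) :=
  ∑ i : Fin b, ∑ j : Fin b,
    if (i : ℕ) < (j : ℕ) then
      kappaCoeff a w [i, j] • ⁅FreeLieAlgebra.of ℚ i, FreeLieAlgebra.of ℚ j⁆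
    else 0

/-- The `m × n` matrix `E` is in row-echelon form with `d` nonzero rows and pivots `p`. -/
structure IsRowEchelonWith {m n : ℕ} (E : Fin m → Fin n → ℤ) (d : ℕ)
    (p : Fin d → Fin n) : Prop where
  le_m : d ≤ m
  mono : StrictMono p
  pivot_ne : ∀ (k : Fin d) (hk : (k : ℕ) < m), E ⟨k, hk⟩ (p k) ≠ 0
  pivot_lead : ∀ (k : Fin d) (hk : (k : ℕ) < m) (j : Fin n), (j : ℕ) < (p k : ℕ) →
    E ⟨k, hk⟩ j = 0
  zero_rows : ∀ k : Fin m, d ≤ (k : ℕ) → ∀ j, E k j = 0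

/-! ### Lower central series and the rational associated graded Lie algebra -/

/-- The lower central series with the paper's indexing: `Γ₁ G = G`, `Γ_{k+1} G = [Γ_k G, G]`. -/
def gammaP (G : Type*) [Group G] (k : ℕ) : Subgroup G := (⊤ : Subgroup G).lowerCentralSeries (k - 1)

instance (G : Type*) [Group G] (k : ℕ) : (gammaP G k).Normal := by
  unfold gammaP; infer_instance

lemma mem_gammaP_one {G : Type*} [Group G] (g : G) : g ∈ gammaP G 1 := by
  show g ∈ (⊤ : Subgroup G).lowerCentralSeries 0
  rw [Subgroup.lowerCentralSeries_zero]; trivial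

lemma commElt_mem_gammaP_two {G : Type*} [Group G] (x y : G) : ⁅x, y⁆ ∈ gammaP G 2 := by
  show ⁅x, y⁆ ∈ (⊤ : Subgroup G).lowerCentralSeries 1
  rw [Subgroup.top_lowerCentralSeries_one, commutator_def]
  exact Subgroup.commutator_mem_commutator (Subgroup.mem_top x) (Subgroup.mem_top y)

/-- The quotient group `Γ_k G / Γ_{k+1} G`. -/
def lcsQuot (G : Type*) [Group G] (k : ℕ) :=
  (gammaP G k) ⧸ ((gammaP G (k + 1)).subgroupOf (gammaP G k))

instance (G : Type*) [Group G] (k : ℕ) : Group (lcsQuot G k) := by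
  unfold lcsQuot; infer_instance

/-- The degree-`k` piece `gr_k(G; ℚ) = (Γ_k G / Γ_{k+1} G) ⊗ ℚ` of the rational associated
graded Lie algebra.  (The quotient `Γ_k/Γ_{k+1}` is abelian, so passing through its
abelianization is the identity.) -/
def grQ (G : Type*) [Group G] (k : ℕ) :=
  ℚ ⊗[ℤ] (Additive (Abelianization (lcsQuot G k)))

instance (G : Type*) [Group G] (k : ℕ) : AddCommGroup (grQ G k) := by
  unfold grQ; infer_instance

instance (G : Type*) [Group G] (k : ℕ) : Module ℚ (grQ G k) := by
  unfold grQ; infer_instance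

/-- The class in `gr_k(G; ℚ)` of an element of `Γ_k G`. -/
def grCls (G : Type*) [Group G] (k : ℕ) (x : gammaP G k) : grQ G k :=
  (1 : ℚ) ⊗ₜ[ℤ] Additive.ofMul (Abelianization.of (QuotientGroup.mk x : lcsQuot G k))

/-! ### Models of `H₁(G;ℚ)`, of `gr(G;ℚ)` as a graded Lie algebra, and of `𝔥(G)` -/

/-- `(V, cls)` is a model of `H₁(G; ℚ) = G_{ab} ⊗ ℚ` together with its canonical class map. -/
structure IsH1Q (G : Type u) [Group G] (V : Type v) [AddCommGroup V] [Module ℚ V]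
    (cls : G → V) : Prop where
  map_mul : ∀ x y : G, cls (x * y) = cls x + cls y
  ker : ∀ x : G, cls x = 0 ↔ ∃ k : ℕ, 0 < k ∧ x ^ k ∈ commutator G
  span : Submodule.span ℚ (Set.range cls) = ⊤

/-- `(L, Lk, cls)` is a model of the rational associated graded Lie algebra
`gr(G; ℚ) = ⊕_{k ≥ 1} (Γ_k G/Γ_{k+1} G) ⊗ ℚ`, with `Lk k` the degree-`k` piece and
`cls k : Γ_k G → L` the canonical class maps; the Lie bracket is induced by the
group commutator. -/
structure IsGrLie (G : Type u) [Group G] (L : Type v) [LieRing L] [LieAlgebra ℚ L]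
    (Lk : ℕ → Submodule ℚ L) (cls : ∀ k : ℕ, (gammaP G k) → L) : Prop where
  internal : DirectSum.IsInternal Lk
  zero : Lk 0 = ⊥
  mem : ∀ (k : ℕ) (x : gammaP G k), cls k x ∈ Lk k
  map_mul : ∀ (k : ℕ) (x y : gammaP G k), cls k (x * y) = cls k x + cls k y
  ker : ∀ (k : ℕ) (x : gammaP G k),
    cls k x = 0 ↔ ∃ j : ℕ, 0 < j ∧ (x : G) ^ j ∈ gammaP G (k + 1)
  span : ∀ k : ℕ, Lk k = Submodule.span ℚ (Set.range (cls k))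
  bracket : ∀ (j k : ℕ) (x : gammaP G j) (y : gammaP G k)
      (h : ⁅(x : G), (y : G)⁆ ∈ gammaP G (j + k)),
      ⁅cls j x, cls k y⁆ = cls (j + k) ⟨⁅(x : G), (y : G)⁆, h⟩

/-- The finite family `(c_i, x_i, y_i)` represents `0` in `gr₂(G; ℚ)`; equivalently, the
corresponding element `Σ c_i · (x̄_i ∧ ȳ_i)` of `⋀² H₁(G;ℚ)` lies in the kernel of the Lie
bracket map `⋀² H₁(G;ℚ) → gr₂(G;ℚ)`. -/
def GrTrivial (G : Type*) [Group G] (s : Finset ℕ) (c : ℕ → ℚ) (x y : ℕ → G) : Prop :=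
  ∑ i ∈ s, c i • grCls G 2 ⟨⁅x i, y i⁆, commElt_mem_gammaP_two _ _⟩ = 0

/-- `(H, ι)` is a model of the holonomy Lie algebra `𝔥(G)`: the quotient of the free
Lie algebra on `H₁(G; ℚ)` by the ideal generated by the kernel of the Lie bracket map
`⋀² H₁(G;ℚ) → gr₂(G;ℚ)` (equivalently, by the image of the dual of the cup product).
Here `ι : G → H` is the composite of the class map `G → H₁(G;ℚ)` with the inclusion of
the degree-one part, and `H` is characterized by the universal property of this quotient. -/
structure IsHolonomy (G : Type u) [Group G] (H : Type v) [LieRing H] [LieAlgebra ℚ H]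
    (ι : G → H) : Prop where
  map_mul : ∀ x y : G, ι (x * y) = ι x + ι y
  ker : ∀ x : G, ι x = 0 ↔ ∃ k : ℕ, 0 < k ∧ x ^ k ∈ commutator G
  gen : LieSubalgebra.lieSpan ℚ H (Set.range ι) = ⊤
  rel : ∀ (s : Finset ℕ) (c : ℕ → ℚ) (x y : ℕ → G), GrTrivial G s c x y →
      ∑ i ∈ s, c i • ⁅ι (x i), ι (y i)⁆ = 0
  univ : ∀ (M : Type (max u v)) [LieRing M] [LieAlgebra ℚ M] (f : G → M),
      (∀ x y : G, f (x * y) = f x + f y) →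
      (∀ (s : Finset ℕ) (c : ℕ → ℚ) (x y : ℕ → G), GrTrivial G s c x y →
        ∑ i ∈ s, c i • ⁅f (x i), f (y i)⁆ = 0) →
      ∃! F : H →ₗ⁅ℚ⁆ M, ∀ g : G, F (ι g) = f g

/-! ### Gradings -/

/-- The standard grading determined by a degree-one piece `V` of a Lie algebra generated in
degree one: `lieDeg V 1 = V` and `lieDeg V (k+1) = span ⁅V, lieDeg V k⁆`. -/
def lieDeg {L : Type*} [LieRing L] [LieAlgebra ℚ L] (V : Submodule ℚ L) :
    ℕ → Submodule ℚ L
  | 0 => ⊥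
  | 1 => V
  | (k + 2) => Submodule.span ℚ {z | ∃ x ∈ V, ∃ y ∈ lieDeg V (k + 1), z = ⁅x, y⁆}

/-- The canonical grading of (a model of) the holonomy Lie algebra `𝔥(G)`, with
`H₁(G;ℚ)` in degree one. -/
def holDeg {G : Type u} [Group G] {H : Type v} [LieRing H] [LieAlgebra ℚ H]
    (ι : G → H) (k : ℕ) : Submodule ℚ H :=
  lieDeg (Submodule.span ℚ (Set.range ι)) k

/-- Two Lie algebras with specified gradings are isomorphic as graded Lie algebras. -/
def IsGradedLieIso {L₁ : Type u} {L₂ : Type v} [LieRing L₁] [LieAlgebra ℚ L₁]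
    [LieRing L₂] [LieAlgebra ℚ L₂] (d₁ : ℕ → Submodule ℚ L₁) (d₂ : ℕ → Submodule ℚ L₂) :
    Prop :=
  ∃ e : L₁ ≃ₗ⁅ℚ⁆ L₂, ∀ k, (d₁ k).map (e.toLinearEquiv.toLinearMap) = d₂ k

/-! ### Finitely presented Lie algebras -/

/-- The degree-one part of the free Lie algebra on the generating set `X`. -/
def flV (X : Type*) : Submodule ℚ (FreeLieAlgebra ℚ X) :=
  Submodule.span ℚ (Set.range (FreeLieAlgebra.of ℚ))

/-- The quotient of the free Lie algebra on the generating set `X` by the Lie ideal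
generated by the set `S`. -/
def presLie (X : Type*) (S : Set (FreeLieAlgebra ℚ X)) :=
  (FreeLieAlgebra ℚ X) ⧸ (LieSubmodule.lieSpan ℚ (FreeLieAlgebra ℚ X) S)

instance (X : Type*) (S : Set (FreeLieAlgebra ℚ X)) : LieRing (presLie X S) := by
  unfold presLie; infer_instance

instance (X : Type*) (S : Set (FreeLieAlgebra ℚ X)) : LieAlgebra ℚ (presLie X S) := by
  unfold presLie; infer_instance

/-- The induced grading on `presLie X S` (images of the graded pieces of the free
Lie algebra). -/
def presDeg (X : Type*) (S : Set (FreeLieAlgebra ℚ X)) (k : ℕ) :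
    Submodule ℚ (presLie X S) :=
  (lieDeg (flV X) k).map
    (LieSubmodule.Quotient.mk' (LieSubmodule.lieSpan ℚ (FreeLieAlgebra ℚ X) S)).toLinearMap

/-- `G` is graded-formal: the canonical surjection `Φ_G : 𝔥(G) ↠ gr(G;ℚ)` (the morphism
restricting to the identity of `H₁(G;ℚ)` in degree one) is an isomorphism. -/
def GradedFormal (G : Type u) [Group G] : Prop :=
  ∀ (H : Type u) [LieRing H] [LieAlgebra ℚ H] (ι : G → H)
    (L : Type u) [LieRing L] [LieAlgebra ℚ L] (Lk : ℕ → Submodule ℚ L)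
    (cls : ∀ k : ℕ, (gammaP G k) → L),
    IsHolonomy G H ι → IsGrLie G L Lk cls →
    ∀ Φ : H →ₗ⁅ℚ⁆ L, (∀ g : G, Φ (ι g) = cls 1 ⟨g, mem_gammaP_one g⟩) →
    Function.Bijective Φ


universe u

/-!
A surjection `p : G → Q` with `ker p ⊆ Γ₃G` induces isomorphisms `H₁(G;ℚ) ≅ H₁(Q;ℚ)` and
`gr₂(G;ℚ) ≅ gr₂(Q;ℚ)`, so `𝔥(G)` and `𝔥(Q)` are presented by the same generators and the same
quadratic relations, and their universal properties give mutually inverse morphisms; this covers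
`Q = G/Γ_kG` for `k ≥ 3`. For `Q = G/Γ₂G` the group `gr₂(Q;ℚ)` vanishes, so every quadratic
relation holds in `𝔥(Q)`: it is abelian, and it has the universal property of `𝔥(G)/𝔥(G)′`.
-/

section LowerCentralSeries

variable {G G' : Type*} [Group G] [Group G']

lemma gammaP_antitone {j k : ℕ} (h : j ≤ k) : gammaP G k ≤ gammaP G j :=
  (⊤ : Subgroup G).lowerCentralSeries_antitone (Nat.sub_le_sub_right h 1)

lemma map_gammaP_le (f : G →* G') (k : ℕ) : (gammaP G k).map f ≤ gammaP G' k := by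
  rw [gammaP, gammaP, Subgroup.map_lowerCentralSeries]
  exact Subgroup.lowerCentralSeries_mono _ le_top

lemma map_gammaP_of_surjective {f : G →* G'} (hf : Function.Surjective f) (k : ℕ) :
    (gammaP G k).map f = gammaP G' k := by
  rw [gammaP, gammaP, Subgroup.map_lowerCentralSeries, Subgroup.map_top_of_surjective f hf]

lemma commutatorElement_quotient_gammaP_two_eq_one (a b : G ⧸ gammaP G 2) : ⁅a, b⁆ = 1 := by
  obtain ⟨u, rfl⟩ := QuotientGroup.mk'_surjective (gammaP G 2) a
  obtain ⟨v, rfl⟩ := QuotientGroup.mk'_surjective (gammaP G 2) b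
  rw [← map_commutatorElement]
  exact (QuotientGroup.eq_one_iff _).mpr (commElt_mem_gammaP_two u v)

end LowerCentralSeries

section GradedPieces

variable {G G' : Type*} [Group G] [Group G']

lemma grCls_mul (k : ℕ) (x y : gammaP G k) :
    grCls G k (x * y) = grCls G k x + grCls G k y := by
  unfold grCls
  erw [← TensorProduct.tmul_add]
  rfl

lemma grCls_eq_zero_of_mem {k : ℕ} (x : gammaP G k) (hx : (x : G) ∈ gammaP G (k + 1)) :
    grCls G k x = 0 := by
  have h1 : (QuotientGroup.mk x : lcsQuot G k) = 1 :=
    (QuotientGroup.eq_one_iff _).mpr (Subgroup.mem_subgroupOf.mpr hx)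
  unfold grCls
  erw [h1, map_one (Abelianization.of (G := lcsQuot G k))]
  exact TensorProduct.tmul_zero _ _

lemma grCls_eq_of_map_eq {f : G →* G'} {k : ℕ} (hker : f.ker ≤ gammaP G (k + 1))
    {x y : gammaP G k} (h : f x = f y) : grCls G k x = grCls G k y := by
  have hxy : (x : G)⁻¹ * y ∈ gammaP G (k + 1) := hker (by simp [h])
  unfold grCls
  rw [QuotientGroup.eq.mpr (Subgroup.mem_subgroupOf.mpr (by simpa using hxy))]

lemma exists_linearMap_grQ {k : ℕ} {N : Type*} [AddCommGroup N] [Module ℚ N]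
    (v : gammaP G k → N) (hmul : ∀ x y, v (x * y) = v x + v y)
    (hv : ∀ x : gammaP G k, (x : G) ∈ gammaP G (k + 1) → v x = 0) :
    ∃ θ : grQ G k →ₗ[ℚ] N, ∀ x, θ (grCls G k x) = v x := by
  let v' : gammaP G k →* Multiplicative N :=
    { toFun := fun x => Multiplicative.ofAdd (v x)
      map_one' := by simp [hv 1 (Subgroup.one_mem _)]
      map_mul' := fun x y => by simp [hmul] }
  let w : lcsQuot G k →* Multiplicative N :=
    QuotientGroup.lift _ v' fun x hx => by simp [v', hv x (Subgroup.mem_subgroupOf.mp hx)]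
  let θ : ℚ ⊗[ℤ] Additive (Abelianization (lcsQuot G k)) →ₗ[ℚ] N :=
    LinearMap.liftBaseChange ℚ (MonoidHom.toAdditiveLeft (Abelianization.lift w)).toIntLinearMap
  refine ⟨θ, fun x => ?_⟩
  show θ (1 ⊗ₜ[ℤ] Additive.ofMul (Abelianization.of (QuotientGroup.mk x))) = v x
  rw [LinearMap.liftBaseChange_tmul, one_smul]
  rfl

lemma GrTrivial.of_linearMap {s : Finset ℕ} {c : ℕ → ℚ} {x y : ℕ → G} {x' y' : ℕ → G'}
    (θ : grQ G 2 →ₗ[ℚ] grQ G' 2)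
    (hθ : ∀ i, θ (grCls G 2 ⟨⁅x i, y i⁆, commElt_mem_gammaP_two _ _⟩)
      = grCls G' 2 ⟨⁅x' i, y' i⁆, commElt_mem_gammaP_two _ _⟩)
    (h : GrTrivial G s c x y) : GrTrivial G' s c x' y' := by
  unfold GrTrivial at h ⊢
  simp_rw [← hθ, ← map_smul, ← map_sum, h, map_zero]

lemma GrTrivial.map (f : G →* G') {s : Finset ℕ} {c : ℕ → ℚ} {x y : ℕ → G}
    (h : GrTrivial G s c x y) : GrTrivial G' s c (f ∘ x) (f ∘ y) := by
  have hf : ∀ {k} (u : gammaP G k), f u ∈ gammaP G' k :=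
    fun u => map_gammaP_le f _ (Subgroup.mem_map_of_mem f u.2)
  obtain ⟨θ, hθ⟩ := exists_linearMap_grQ (fun u : gammaP G 2 => grCls G' 2 ⟨f u, hf u⟩)
    (fun u u' => by rw [← grCls_mul]; congr 1; exact Subtype.ext (map_mul f _ _))
    (fun u hu => grCls_eq_zero_of_mem _ (map_gammaP_le f _ (Subgroup.mem_map_of_mem f hu)))
  refine h.of_linearMap θ fun i => ?_
  rw [hθ]
  exact congrArg _ (Subtype.ext (map_commutatorElement f _ _))

lemma GrTrivial.of_map {f : G →* G'} (hf : Function.Surjective f) (hker : f.ker ≤ gammaP G 3)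
    {s : Finset ℕ} {c : ℕ → ℚ} {x y : ℕ → G}
    (h : GrTrivial G' s c (f ∘ x) (f ∘ y)) : GrTrivial G s c x y := by
  have hlift (q : gammaP G' 2) : ∃ g : gammaP G 2, f g = q := by
    obtain ⟨g, hg, hfg⟩ := (map_gammaP_of_surjective hf 2).ge q.2
    exact ⟨⟨g, hg⟩, hfg⟩
  choose lift hlift using hlift
  obtain ⟨θ, hθ⟩ := exists_linearMap_grQ (fun q => grCls G 2 (lift q))
    (fun q q' => by
      rw [← grCls_mul]
      exact grCls_eq_of_map_eq hker (by simp [hlift]))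
    (fun q hq => by
      obtain ⟨g, hg, hfg⟩ := (map_gammaP_of_surjective hf 3).ge hq
      rw [grCls_eq_of_map_eq (y := ⟨g, gammaP_antitone (by norm_num) hg⟩) hker
        (by simp [hlift, hfg])]
      exact grCls_eq_zero_of_mem _ hg)
  refine h.of_linearMap θ fun i => ?_
  rw [hθ]
  exact grCls_eq_of_map_eq hker (by simp [hlift, map_commutatorElement])

lemma grTrivial_of_commutatorElement_eq_one (hG : ∀ a b : G, ⁅a, b⁆ = 1)
    (s : Finset ℕ) (c : ℕ → ℚ) (x y : ℕ → G) : GrTrivial G s c x y := by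
  refine Finset.sum_eq_zero fun i _ => ?_
  rw [grCls_eq_zero_of_mem _ (by simp [hG]), smul_zero]

end GradedPieces

section LieAlgebras

variable {R L M : Type*} [CommRing R] [LieRing L] [LieAlgebra R L] [LieRing M] [LieAlgebra R M]

lemma LieHom.ext_of_lieSpan_eq_top {s : Set L} (hs : LieSubalgebra.lieSpan R L s = ⊤)
    {F F' : L →ₗ⁅R⁆ M} (h : Set.EqOn F F' s) : F = F' := by
  ext x
  have hx : x ∈ LieSubalgebra.lieSpan R L s := hs ▸ LieSubalgebra.mem_top x
  induction hx using LieSubalgebra.lieSpan_induction with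
  | mem x hx => exact h hx
  | zero => simp
  | add x y _ _ hx hy => simp [hx, hy]
  | smul a x _ hx => simp [hx]
  | lie x y _ _ hx hy => simp [hx, hy]

lemma LieHom.bijective_of_inverse_on_generators (F : L →ₗ⁅R⁆ M) (F' : M →ₗ⁅R⁆ L)
    {s : Set L} {t : Set M} (hs : LieSubalgebra.lieSpan R L s = ⊤)
    (ht : LieSubalgebra.lieSpan R M t = ⊤)
    (h₁ : ∀ x ∈ s, F' (F x) = x) (h₂ : ∀ y ∈ t, F (F' y) = y) : Function.Bijective F := by
  have e₁ : F'.comp F = LieHom.id := LieHom.ext_of_lieSpan_eq_top hs h₁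
  have e₂ : F.comp F' = LieHom.id := LieHom.ext_of_lieSpan_eq_top ht h₂
  exact ⟨Function.LeftInverse.injective (LieHom.congr_fun e₁),
    Function.RightInverse.surjective (LieHom.congr_fun e₂)⟩

lemma lieSpan_image_eq_top {F : L →ₗ⁅R⁆ M} (hF : Function.Surjective F) {s : Set L}
    (hs : LieSubalgebra.lieSpan R L s = ⊤) : LieSubalgebra.lieSpan R M (F '' s) = ⊤ := by
  rw [← LieSubalgebra.map_lieSpan, hs, ← LieSubalgebra.map_top, F.range_eq_top.mpr hF]

lemma isLieAbelian_of_lieSpan_eq_top {s : Set L} (hs : LieSubalgebra.lieSpan R L s = ⊤)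
    (h : ∀ x ∈ s, ∀ y ∈ s, ⁅x, y⁆ = 0) : IsLieAbelian L := by
  refine ⟨fun a b => ?_⟩
  have mem (z : L) : z ∈ LieSubalgebra.lieSpan R L s := hs ▸ LieSubalgebra.mem_top z
  have := (LieSubalgebra.isLieAbelian_lieSpan_iff.mpr h).trivial ⟨a, mem a⟩ ⟨b, mem b⟩
  simpa [Subtype.ext_iff] using this

lemma derivedSeries_one_le_ker [IsLieAbelian M] (F : L →ₗ⁅R⁆ M) :
    LieAlgebra.derivedSeries R L 1 ≤ F.ker := by
  rw [LieAlgebra.derivedSeries_def, LieAlgebra.derivedSeriesOfIdeal_succ,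
    LieAlgebra.derivedSeriesOfIdeal_zero, LieSubmodule.lie_le_iff]
  intro x _ y _
  rw [LieHom.mem_ker, F.map_lie, trivial_lie_zero]

/-- `LieSubmodule.Quotient.mk'` is only a morphism of Lie modules. -/
def quotientMkLieHom (I : LieIdeal R L) : L →ₗ⁅R⁆ L ⧸ I :=
  { (LieSubmodule.Quotient.mk' I).toLinearMap with
    map_lie' := fun {x y} => LieSubmodule.Quotient.mk_bracket (I := I) x y }

lemma quotientMkLieHom_surjective (I : LieIdeal R L) : Function.Surjective (quotientMkLieHom I) :=
  LieSubmodule.Quotient.surjective_mk' I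

instance : IsLieAbelian (L ⧸ LieAlgebra.derivedSeries R L 1) := by
  refine ⟨fun a b => ?_⟩
  obtain ⟨x, rfl⟩ := LieSubmodule.Quotient.surjective_mk' _ a
  obtain ⟨y, rfl⟩ := LieSubmodule.Quotient.surjective_mk' _ b
  rw [LieSubmodule.Quotient.mk'_apply, LieSubmodule.Quotient.mk'_apply,
    ← LieSubmodule.Quotient.mk_bracket, LieSubmodule.Quotient.mk_eq_zero',
    LieAlgebra.derivedSeries_def, LieAlgebra.derivedSeriesOfIdeal_succ,
    LieAlgebra.derivedSeriesOfIdeal_zero]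
  exact LieSubmodule.lie_mem_lie (LieSubmodule.mem_top x) (LieSubmodule.mem_top y)

lemma exists_lieHom_quotient_lift (F : L →ₗ⁅R⁆ M) {I : LieIdeal R L} (hI : I ≤ F.ker) :
    ∃ F' : L ⧸ I →ₗ⁅R⁆ M, ∀ x, F' (quotientMkLieHom I x) = F x := by
  let F₀ : L ⧸ I →ₗ[R] M := I.toSubmodule.liftQ F.toLinearMap fun x hx => hI hx
  refine ⟨{ F₀ with map_lie' := fun {a b} => ?_ }, fun x => rfl⟩
  obtain ⟨x, rfl⟩ := quotientMkLieHom_surjective I a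
  obtain ⟨y, rfl⟩ := quotientMkLieHom_surjective I b
  rw [← LieHom.map_lie]
  exact F.map_lie x y

end LieAlgebras

section Gradings

variable {L M : Type*} [LieRing L] [LieAlgebra ℚ L] [LieRing M] [LieAlgebra ℚ M]

lemma lieDeg_map (F : L →ₗ⁅ℚ⁆ M) (V : Submodule ℚ L) :
    ∀ k, (lieDeg V k).map F.toLinearMap = lieDeg (V.map F.toLinearMap) k
  | 0 => Submodule.map_bot _
  | 1 => rfl
  | (k + 2) => by
    rw [lieDeg, lieDeg, Submodule.map_span, ← lieDeg_map F V (k + 1)]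
    congr 1
    ext z
    constructor
    · rintro ⟨_, ⟨x, hx, y, hy, rfl⟩, rfl⟩
      exact ⟨F x, ⟨x, hx, rfl⟩, F y, ⟨y, hy, rfl⟩, F.map_lie x y⟩
    · rintro ⟨_, ⟨x, hx, rfl⟩, _, ⟨y, hy, rfl⟩, rfl⟩
      exact ⟨⁅x, y⁆, ⟨x, hx, y, hy, rfl⟩, F.map_lie x y⟩

variable {G G' : Type*} [Group G] [Group G']

lemma holDeg_map (ι : G → L) (F : L →ₗ⁅ℚ⁆ M) (k : ℕ) :
    (holDeg ι k).map F.toLinearMap = holDeg (F ∘ ι) k := by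
  rw [holDeg, lieDeg_map, Submodule.map_span, holDeg, Set.range_comp]
  rfl

lemma holDeg_comp_of_surjective (ι : G' → L) {p : G → G'} (hp : Function.Surjective p) :
    holDeg (ι ∘ p) = holDeg ι := by
  unfold holDeg
  rw [hp.range_comp]

end Gradings

namespace IsHolonomy

section

variable {G : Type u} [Group G] {H : Type v} [LieRing H] [LieAlgebra ℚ H] {ι : G → H}

lemma apply_eq_zero_of_mem_gammaP_two (hH : IsHolonomy G H ι) {g : G} (hg : g ∈ gammaP G 2) :
    ι g = 0 :=
  (hH.ker g).mpr ⟨1, one_pos, by rwa [pow_one]⟩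

lemma exists_map (hH : IsHolonomy G H ι) {Q : Type*} [Group Q] {HQ : Type (max u v)}
    [LieRing HQ] [LieAlgebra ℚ HQ] {ιQ : Q → HQ} (hQ : IsHolonomy Q HQ ιQ) (φ : G →* Q) :
    ∃ F : H →ₗ⁅ℚ⁆ HQ, ∀ g, F (ι g) = ιQ (φ g) := by
  obtain ⟨F, hF, -⟩ := hH.univ HQ (ιQ ∘ φ) (fun a b => by simp [hQ.map_mul])
    (fun s c x y h => hQ.rel s c _ _ (h.map φ))
  exact ⟨F, hF⟩

lemma exists_lieHom_of_surjective (hH : IsHolonomy G H ι) {P : Type*} [Group P]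
    {M : Type (max u v)} [LieRing M] [LieAlgebra ℚ M] {p : P →* G} (hp : Function.Surjective p)
    (f : P → M) (hf_mul : ∀ a b, f (a * b) = f a + f b) (hf_ker : ∀ a ∈ p.ker, f a = 0)
    (hf_rel : ∀ s c (x y : ℕ → P), GrTrivial G s c (p ∘ x) (p ∘ y) →
      ∑ i ∈ s, c i • ⁅f (x i), f (y i)⁆ = 0) :
    ∃ F : H →ₗ⁅ℚ⁆ M, ∀ a, F (ι (p a)) = f a := by
  let σ := Function.surjInv hp
  have hpσ (g : G) : p (σ g) = g := Function.surjInv_eq hp g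
  have hfσ (a : P) : f (σ (p a)) = f a := by
    have hmem : (σ (p a))⁻¹ * a ∈ p.ker := by simp [hpσ]
    conv_rhs => rw [← mul_inv_cancel_left (σ (p a)) a]
    rw [hf_mul, hf_ker _ hmem, add_zero]
  obtain ⟨F, hF, -⟩ := hH.univ M (f ∘ σ)
    (fun g g' => by
      obtain ⟨a, rfl⟩ := hp g
      obtain ⟨b, rfl⟩ := hp g'
      show f (σ (p a * p b)) = f (σ (p a)) + f (σ (p b))
      rw [← _root_.map_mul p a b, hfσ, hfσ, hfσ, hf_mul])
    (fun s c x y h => hf_rel s c (σ ∘ x) (σ ∘ y) (by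
      rwa [← Function.comp_assoc, ← Function.comp_assoc,
        (Function.rightInverse_surjInv hp).comp_eq_id]))
  exact ⟨F, fun a => (hF (p a)).trans (hfσ a)⟩

lemma isLieAbelian (hH : IsHolonomy G H ι) (hG : ∀ a b : G, ⁅a, b⁆ = 1) : IsLieAbelian H := by
  refine isLieAbelian_of_lieSpan_eq_top hH.gen ?_
  rintro _ ⟨a, rfl⟩ _ ⟨b, rfl⟩
  simpa using hH.rel {0} (fun _ => 1) (fun _ => a) (fun _ => b)
    (grTrivial_of_commutatorElement_eq_one hG _ _ _ _)

end

section

variable {G Q H HQ : Type u} [Group G] [Group Q] [LieRing H] [LieAlgebra ℚ H]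
  [LieRing HQ] [LieAlgebra ℚ HQ] {ι : G → H} {ιQ : Q → HQ}

theorem exists_bijective_of_ker_le_gammaP_three (hH : IsHolonomy G H ι)
    (hQ : IsHolonomy Q HQ ιQ) {p : G →* Q} (hp : Function.Surjective p)
    (hker : p.ker ≤ gammaP G 3) :
    ∃ F : H →ₗ⁅ℚ⁆ HQ, (∀ g, F (ι g) = ιQ (p g)) ∧ Function.Bijective F := by
  obtain ⟨F, hF⟩ := hH.exists_map hQ p
  obtain ⟨F', hF'⟩ := hQ.exists_lieHom_of_surjective hp ι hH.map_mul
    (fun a ha => hH.apply_eq_zero_of_mem_gammaP_two (gammaP_antitone (by norm_num) (hker ha)))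
    (fun s c x y h => hH.rel s c x y (h.of_map hp hker))
  refine ⟨F, hF, LieHom.bijective_of_inverse_on_generators F F' hH.gen hQ.gen ?_ ?_⟩
  · rintro _ ⟨g, rfl⟩
    rw [hF, hF']
  · rintro _ ⟨q, rfl⟩
    obtain ⟨g, rfl⟩ := hp q
    rw [hF', hF]

theorem exists_bijective_quotient_derivedSeries (hH : IsHolonomy G H ι)
    {ι₂ : G ⧸ gammaP G 2 → HQ} (hQ : IsHolonomy (G ⧸ gammaP G 2) HQ ι₂) :
    ∃ F : HQ →ₗ⁅ℚ⁆ H ⧸ LieAlgebra.derivedSeries ℚ H 1,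
      (∀ g : G, F (ι₂ (QuotientGroup.mk g)) = quotientMkLieHom _ (ι g)) ∧
        Function.Bijective F := by
  let π := quotientMkLieHom (LieAlgebra.derivedSeries ℚ H 1)
  let p := QuotientGroup.mk' (gammaP G 2)
  have := hQ.isLieAbelian commutatorElement_quotient_gammaP_two_eq_one
  obtain ⟨E, hE⟩ := hH.exists_map hQ p
  obtain ⟨E', hE'⟩ := exists_lieHom_quotient_lift E (derivedSeries_one_le_ker E)
  obtain ⟨F, hF⟩ := hQ.exists_lieHom_of_surjective (QuotientGroup.mk'_surjective _) (π ∘ ι)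
    (fun a b => by simp [hH.map_mul])
    (fun a ha => by simp [hH.apply_eq_zero_of_mem_gammaP_two (by simpa [p] using ha)])
    (fun s c x y _ => by simp [trivial_lie_zero])
  refine ⟨F, hF, LieHom.bijective_of_inverse_on_generators F E' hQ.gen
    (lieSpan_image_eq_top (quotientMkLieHom_surjective _) hH.gen) ?_ ?_⟩
  · rintro _ ⟨q, rfl⟩
    obtain ⟨g, rfl⟩ := QuotientGroup.mk'_surjective _ q
    exact (congrArg E' (hF g)).trans ((hE' _).trans (hE g))
  · rintro _ ⟨_, ⟨g, rfl⟩, rfl⟩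
    rw [hE', hE, hF]
    rfl

end

end IsHolonomy

theorem holonomy_nilpotent_quotients_general (G : Type u) [Group G]
    (H : Type u) [LieRing H] [LieAlgebra ℚ H] (ι : G → H) (hH : IsHolonomy G H ι) :
    (∀ (H₂ : Type u) [LieRing H₂] [LieAlgebra ℚ H₂]
        (ι₂ : (G ⧸ gammaP G 2) → H₂), IsHolonomy (G ⧸ gammaP G 2) H₂ ι₂ →
        IsGradedLieIso (holDeg ι₂)
          (fun k => (holDeg ι k).map
            (LieSubmodule.Quotient.mk' (LieAlgebra.derivedSeries ℚ H 1)).toLinearMap)) ∧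
    (∀ k : ℕ, 3 ≤ k →
      ∀ (Hk : Type u) [LieRing Hk] [LieAlgebra ℚ Hk]
        (ιk : (G ⧸ gammaP G k) → Hk), IsHolonomy (G ⧸ gammaP G k) Hk ιk →
        ∃ F : H →ₗ⁅ℚ⁆ Hk,
          (∀ g : G, F (ι g) = ιk (QuotientGroup.mk g)) ∧ Function.Bijective F ∧
          ∀ j, (holDeg ι j).map F.toLinearMap = holDeg ιk j) := by
  refine ⟨fun H₂ _ _ ι₂ hH₂ => ?_, fun k hk Hk _ _ ιk hHk => ?_⟩
  · obtain ⟨F, hF, hbij⟩ := hH.exists_bijective_quotient_derivedSeries hH₂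
    refine ⟨LieEquiv.ofBijective F hbij, fun j => ?_⟩
    calc (holDeg ι₂ j).map F.toLinearMap
        = holDeg ((F ∘ ι₂) ∘ QuotientGroup.mk) j := by
          rw [holDeg_map, holDeg_comp_of_surjective _ QuotientGroup.mk_surjective]
      _ = (holDeg ι j).map (quotientMkLieHom _).toLinearMap := by
          rw [holDeg_map]
          exact congrArg (holDeg · j) (funext hF)
  · obtain ⟨F, hF, hbij⟩ := hH.exists_bijective_of_ker_le_gammaP_three hHk
      (QuotientGroup.mk'_surjective (gammaP G k))
      (by rw [QuotientGroup.ker_mk']; exact gammaP_antitone hk)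
    refine ⟨F, hF, hbij, fun j => ?_⟩
    rw [holDeg_map, show F ∘ ι = ιk ∘ QuotientGroup.mk from funext hF,
      holDeg_comp_of_surjective _ QuotientGroup.mk_surjective]

/-- Proposition 6.8 of [Suciu–Wang].  For a finitely generated group
`G`:  `𝔥(G/Γ₂G) ≅ 𝔥(G)/𝔥(G)′` (as graded Lie algebras), and for each `k ≥ 3` the
projection `G → G/Γ_kG` induces an isomorphism of graded Lie algebras
`𝔥(G) ≅ 𝔥(G/Γ_kG)`; in particular `𝔥(G)` depends only on `G/Γ₃G`. -/
theorem holonomy_nilpotent_quotients (G : Type u) [Group G] (hG : Group.FG G)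
    (H : Type u) [LieRing H] [LieAlgebra ℚ H] (ι : G → H) (hH : IsHolonomy G H ι) :
    (∀ (H₂ : Type u) [LieRing H₂] [LieAlgebra ℚ H₂]
        (ι₂ : (G ⧸ gammaP G 2) → H₂), IsHolonomy (G ⧸ gammaP G 2) H₂ ι₂ →
        IsGradedLieIso (holDeg ι₂)
          (fun k => (holDeg ι k).map
            (LieSubmodule.Quotient.mk' (LieAlgebra.derivedSeries ℚ H 1)).toLinearMap)) ∧
    (∀ k : ℕ, 3 ≤ k →
      ∀ (Hk : Type u) [LieRing Hk] [LieAlgebra ℚ Hk]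
        (ιk : (G ⧸ gammaP G k) → Hk), IsHolonomy (G ⧸ gammaP G k) Hk ιk →
        ∃ F : H →ₗ⁅ℚ⁆ Hk,
          (∀ g : G, F (ι g) = ιk (QuotientGroup.mk g)) ∧ Function.Bijective F ∧
          ∀ j, (holDeg ι j).map F.toLinearMap = holDeg ιk j) :=
  holonomy_nilpotent_quotients_general G H ι hH

end ArXiv170107768
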